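/- Let S ⊆ ℕ be a simple set. Then the ceer R_S generated by S is dark: R_S has infinitely many equivalence classes, yet there is no computable function f : ℕ → ℕ such that for all x, y: x = y ↔ f(x) R_S f(y). -/

import Mathlib

/-- `OracleRecursiveIn O f` means the partial function `f` is partial recursive in the
(total) oracle `O`. -/
inductive OracleRecursiveIn (O : ℕ → ℕ) : (ℕ →. ℕ) → Prop
  | zero : OracleRecursiveIn O (pure 0)
  | succ : OracleRecursiveIn O Nat.succ
  | left : OracleRecursiveIn O ↑fun n : ℕ => n.unpair.1
  | right : OracleRecursiveIn O ↑fun n : ℕ => n.unpair.2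
  | oracle : OracleRecursiveIn O ↑O
  | pair {f g} : OracleRecursiveIn O f → OracleRecursiveIn O g →
      OracleRecursiveIn O fun n => Nat.pair <$> f n <*> g n
  | comp {f g} : OracleRecursiveIn O f → OracleRecursiveIn O g →
      OracleRecursiveIn O fun n => g n >>= f
  | prec {f g} : OracleRecursiveIn O f → OracleRecursiveIn O g →
      OracleRecursiveIn O (Nat.unpaired fun a n =>
        n.rec (f a) fun y IH => do let i ← IH; g (Nat.pair a (Nat.pair y i)))
  | rfind {f} : OracleRecursiveIn O f →
      OracleRecursiveIn O fun a => Nat.rfind fun n => (fun m => m = 0) <$> f (Nat.pair a n)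

/-- Turing reducibility between total functions on `ℕ`. -/
def FnTuringReducible (f g : ℕ → ℕ) : Prop := OracleRecursiveIn g ↑f

/-- Turing equivalence of total functions on `ℕ`. -/
def FnTuringEquivalent (f g : ℕ → ℕ) : Prop := FnTuringReducible f g ∧ FnTuringReducible g f

theorem FnTuringReducible.refl (f : ℕ → ℕ) : FnTuringReducible f f := OracleRecursiveIn.oracle

theorem OracleRecursiveIn.trans' {f : ℕ →. ℕ} {g h : ℕ → ℕ}
    (hf : OracleRecursiveIn g f) (hg : FnTuringReducible g h) : OracleRecursiveIn h f := by
  induction hf with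
  | zero => exact .zero
  | succ => exact .succ
  | left => exact .left
  | right => exact .right
  | oracle => exact hg
  | pair _ _ ih₁ ih₂ => exact .pair ih₁ ih₂
  | comp _ _ ih₁ ih₂ => exact .comp ih₁ ih₂
  | prec _ _ ih₁ ih₂ => exact .prec ih₁ ih₂
  | rfind _ ih => exact .rfind ih

theorem FnTuringReducible.trans {f g h : ℕ → ℕ}
    (h₁ : FnTuringReducible f g) (h₂ : FnTuringReducible g h) : FnTuringReducible f h :=
  OracleRecursiveIn.trans' h₁ h₂

/-- The setoid of Turing equivalence. -/
def turingSetoid : Setoid (ℕ → ℕ) :=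
  ⟨FnTuringEquivalent,
    fun f => ⟨.refl f, .refl f⟩,
    fun ⟨h₁, h₂⟩ => ⟨h₂, h₁⟩,
    fun ⟨a₁, a₂⟩ ⟨b₁, b₂⟩ => ⟨a₁.trans b₁, b₂.trans a₂⟩⟩

/-- Turing degrees. -/
def FnTuringDegree : Type := Quotient turingSetoid

/-- The Turing degree of a total function. -/
def FnTuringDegree.deg (f : ℕ → ℕ) : FnTuringDegree := Quotient.mk turingSetoid f

instance : LE FnTuringDegree :=
  ⟨fun d₁ d₂ =>
    Quotient.liftOn₂ d₁ d₂ FnTuringReducible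
      (fun _ _ _ _ h h' =>
        propext ⟨fun hr => (h.2.trans hr).trans h'.1, fun hr => (h.1.trans hr).trans h'.2⟩)⟩

instance : LT FnTuringDegree := ⟨fun d₁ d₂ => d₁ ≤ d₂ ∧ ¬d₂ ≤ d₁⟩

/-- The least Turing degree. -/
def FnTuringDegree.zero : FnTuringDegree := FnTuringDegree.deg fun _ => 0

/-- A partial function is computable in a Turing degree if it is recursive in some
(equivalently, any) representative of that degree. -/
def FnTuringDegree.ComputableIn (d : FnTuringDegree) (f : ℕ →. ℕ) : Prop :=
  Quotient.liftOn d (fun g => OracleRecursiveIn g f)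
    (fun _ _ h => propext ⟨fun hr => hr.trans' h.1, fun hr => hr.trans' h.2⟩)

open Classical in
/-- The characteristic function of a set of naturals. -/
noncomputable def charFun (A : Set ℕ) : ℕ → ℕ := fun n => if n ∈ A then 1 else 0

/-- Turing reducibility between sets of naturals. -/
noncomputable def SetTuringReducible (A B : Set ℕ) : Prop :=
  FnTuringReducible (charFun A) (charFun B)

/-- The Turing degree of a set of naturals. -/
noncomputable def FnTuringDegree.degSet (A : Set ℕ) : FnTuringDegree :=
  FnTuringDegree.deg (charFun A)

/-- `R` is `d`-computably reducible to `S`. -/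
def ReducibleIn (d : FnTuringDegree) (R S : ℕ → ℕ → Prop) : Prop :=
  ∃ f : ℕ → ℕ, d.ComputableIn ↑f ∧ ∀ x y, R x y ↔ S (f x) (f y)

/-- The reducibility spectrum of the pair `(R, S)`. -/
def SpecRed (R S : ℕ → ℕ → Prop) : Set FnTuringDegree := {d | ReducibleIn d R S}

/-- The bi-reducibility spectrum of the pair `(R, S)`. -/
def SpecBired (R S : ℕ → ℕ → Prop) : Set FnTuringDegree :=
  {d | ReducibleIn d R S ∧ ReducibleIn d S R}

/-- The equivalence relation generated by a set `A`: two numbers are equivalent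
iff they are equal or both belong to `A`. -/
def genRel (A : Set ℕ) : ℕ → ℕ → Prop := fun x y => x = y ∨ (x ∈ A ∧ y ∈ A)

/-- A ceer: an equivalence relation whose set of pairs is computably enumerable. -/
def Ceer (R : ℕ → ℕ → Prop) : Prop :=
  Equivalence R ∧ REPred fun p : ℕ × ℕ => R p.1 p.2

/-- A computably enumerable set of naturals. -/
def CePred (A : Set ℕ) : Prop := REPred (· ∈ A)

/-- A partial transversal of `R`: a set any two distinct elements of which are
`R`-inequivalent. -/
def PartialTransversal (R : ℕ → ℕ → Prop) (A : Set ℕ) : Prop :=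
  ∀ x ∈ A, ∀ y ∈ A, x ≠ y → ¬R x y

/-- An introreducible set: an infinite set computable from each of its infinite subsets. -/
def Introreducible (B : Set ℕ) : Prop :=
  B.Infinite ∧ ∀ C : Set ℕ, C ⊆ B → C.Infinite → SetTuringReducible B C

section Aux

variable {α : Type*} {β : Type*} [Primcodable α] [Primcodable β]

theorem myRePred.or {p q : α → Prop} (hp : REPred p) (hq : REPred q) :
    REPred fun a => p a ∨ q a := by
  obtain ⟨k, hk, H⟩ := Partrec.merge' hp hq
  refine hk.dom_re.of_eq fun a => ?_
  rw [(H a).2]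
  constructor
  · rintro (⟨h, -⟩ | ⟨h, -⟩)
    · exact Or.inl h
    · exact Or.inr h
  · rintro (h | h)
    · exact Or.inl ⟨h, trivial⟩
    · exact Or.inr ⟨h, trivial⟩

theorem myRePred.and {p q : α → Prop} (hp : REPred p) (hq : REPred q) :
    REPred fun a => p a ∧ q a := by
  have h : Partrec fun a =>
      (Part.assert (p a) fun _ => Part.some ()).bind fun _ =>
        Part.assert (q a) fun _ => Part.some () :=
    hp.bind (hq.comp Computable.fst).to₂
  refine h.dom_re.of_eq fun a => ?_
  simp only [Part.bind_dom]
  constructor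
  · rintro ⟨⟨h1, -⟩, ⟨h2, -⟩⟩
    exact ⟨h1, h2⟩
  · rintro ⟨h1, h2⟩
    exact ⟨⟨h1, trivial⟩, ⟨h2, trivial⟩⟩

theorem myRePred.comp {p : β → Prop} {f : α → β} (hp : REPred p) (hf : Computable f) :
    REPred fun a => p (f a) :=
  (hp.comp hf : Partrec fun a => Part.assert (p (f a)) fun _ => Part.some ())

theorem myRePred.range {g : ℕ → ℕ} (hg : Computable g) :
    REPred fun n => ∃ x, g x = n := by
  have hc : Computable fun pr : ℕ × ℕ => decide (g pr.2 = pr.1) :=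
    Primrec.eq.decide.to_comp.comp (hg.comp Computable.snd) Computable.fst
  have h : Partrec fun n => Nat.rfind fun x => (decide (g x = n) : Part Bool) :=
    Partrec.rfind hc.to₂.partrec₂
  refine h.dom_re.of_eq fun n => ?_
  refine Nat.rfind_dom.trans ?_
  constructor
  · rintro ⟨m, hm, -⟩
    exact ⟨m, by simpa using hm⟩
  · rintro ⟨x, hx⟩
    exact ⟨x, by simpa using hx, fun {_} _ => trivial⟩

end Aux

/-- For a simple set `S`, the ceer `R_S` is dark: it is a ceer with
infinitely many classes and `Id` is not computably reducible to it. -/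
theorem stmt_11 (S : Set ℕ) (hce : CePred S) (hco : Sᶜ.Infinite)
    (himm : ∀ Y : Set ℕ, Y ⊆ Sᶜ → CePred Y → Y.Finite) :
    Ceer (genRel S) ∧ Infinite (Quot (genRel S)) ∧
      ¬∃ f : ℕ → ℕ, Computable f ∧ ∀ x y, x = y ↔ genRel S (f x) (f y) := by
  refine ⟨⟨?_, ?_⟩, ?_, ?_⟩
  · -- equivalence
    constructor
    · exact fun x => Or.inl rfl
    · rintro x y (rfl | ⟨h1, h2⟩)
      · exact Or.inl rfl
      · exact Or.inr ⟨h2, h1⟩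
    · rintro x y z (rfl | ⟨h1, h2⟩) (rfl | ⟨h3, h4⟩)
      · exact Or.inl rfl
      · exact Or.inr ⟨h3, h4⟩
      · exact Or.inr ⟨h1, h2⟩
      · exact Or.inr ⟨h1, h4⟩
  · -- ce-ness of the relation
    have h1 : REPred fun p : ℕ × ℕ => p.1 = p.2 := by
      refine ComputablePred.to_re ⟨fun p => inferInstanceAs (Decidable (p.1 = p.2)), ?_⟩
      exact Primrec.to_comp (Primrec.eq.decide.comp Primrec.fst Primrec.snd)
    have h2 : REPred fun p : ℕ × ℕ => p.1 ∈ S ∧ p.2 ∈ S :=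
      myRePred.and (myRePred.comp hce Computable.fst) (myRePred.comp hce Computable.snd)
    exact myRePred.or h1 h2
  · -- infinitely many classes
    have hinf : Infinite ↥(Sᶜ) := Set.infinite_coe_iff.mpr hco
    refine Infinite.of_injective (fun n : ↥(Sᶜ) => Quot.mk (genRel S) (n : ℕ)) ?_
    intro a b hab
    classical
    let F : Quot (genRel S) → ℕ := Quot.lift (fun n => if n ∈ S then 0 else n + 1)
      (by
        rintro x y (rfl | ⟨h1, h2⟩)
        · rfl
        · show (if x ∈ S then 0 else x + 1) = (if y ∈ S then 0 else y + 1)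
          rw [if_pos h1, if_pos h2])
    have h : (if (a : ℕ) ∈ S then 0 else (a : ℕ) + 1)
        = (if (b : ℕ) ∈ S then 0 else (b : ℕ) + 1) := congrArg F hab
    rw [if_neg a.2, if_neg b.2] at h
    exact Subtype.ext (Nat.succ_injective h)
  · -- darkness
    rintro ⟨f, hf, hiff⟩
    have finj : Function.Injective f := fun x y h => (hiff x y).2 (Or.inl h)
    have hne : ∀ x y, x ≠ y → ¬(f x ∈ S ∧ f y ∈ S) := fun x y hxy h =>
      hxy ((hiff x y).2 (Or.inr h))
    -- pick x₀ such that all y ≠ x₀ have f y ∉ S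
    obtain ⟨x₀, hx₀⟩ : ∃ x₀ : ℕ, ∀ y, y ≠ x₀ → f y ∉ S := by
      by_cases hex : ∃ x, f x ∈ S
      · obtain ⟨x₀, hx₀⟩ := hex
        exact ⟨x₀, fun y hy hyS => hne y x₀ hy ⟨hyS, hx₀⟩⟩
      · exact ⟨0, fun y _ hyS => hex ⟨y, hyS⟩⟩
    set e : ℕ → ℕ := fun x => if x < x₀ then x else x + 1 with he
    have heinj : Function.Injective e := by
      intro x y hxy
      simp only [he] at hxy
      split_ifs at hxy with h1 h2 h2 <;> omega
    have hene : ∀ x, e x ≠ x₀ := by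
      intro x
      simp only [he]
      split_ifs with h <;> omega
    have hecomp : Computable e := by
      refine Primrec.to_comp ?_
      exact Primrec.ite (Primrec.nat_lt.comp Primrec.id (Primrec.const x₀)) Primrec.id
        Primrec.succ
    set g : ℕ → ℕ := fun x => f (e x) with hgdef
    have hgcomp : Computable g := hf.comp hecomp
    have hginj : Function.Injective g := fun x y h => heinj (finj h)
    set Y : Set ℕ := {n | ∃ x, g x = n} with hY
    have hYce : CePred Y := myRePred.range hgcomp
    have hYsub : Y ⊆ Sᶜ := by
      rintro n ⟨x, rfl⟩
      exact hx₀ (e x) (hene x)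
    have hYinf : Y.Infinite := by
      have : Y = Set.range g := by ext n; simp [hY, Set.range, eq_comm]
      rw [this]
      exact Set.infinite_range_of_injective hginj
    exact hYinf (himm Y hYsub hYce)
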